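/- arXiv:1811.00492 — 2 statements merged into one kernel-verified Lean document; each statement's English description precedes it below -/
import Mathlib

section
/- (Scanning-to-deceleration shock profile; Theorem 4.4.) Let u₊ < u₋ be real numbers, let w : ℝ → ℝ be locally Lipschitz, set v₋ := w(u₋), v₊ := w(u₊), and s := −(v₊ − v₋)/(u₊ − u₋). Assume the chord condition: for every u ∈ (u₊, u₋), (v₊ − v₋)/(u₊ − u₋) > (w(u) − v₋)/(u − u₋). Then there exists a continuously differentiable, strictly decreasing function u : ℝ → ℝ with values in (u₊, u₋), satisfying u′(ξ) = −s·(u(ξ) − u₋) − (w(u(ξ)) − v₋) for all ξ ∈ ℝ, with u(ξ) → u₋ as ξ → −∞ and u(ξ) → u₊ as ξ → +∞. -/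
open Filter Topology Set

/-!
Write the profile equation as `u' = F u` with `F u = -s (u - u₋) - (w u - v₋)`. Then
`F u₋ = F u₊ = 0`, and the chord condition says exactly that `F < 0` on `(u₊, u₋)`. Separating
variables, `ξ(u) = ∫ du / F(u)` is strictly decreasing on `(u₊, u₋)`, and since `F` is Lipschitz
near its zeros, `|F u| ≤ L |u - u±|` there, so the integral diverges logarithmically: `ξ` maps
`(u₊, u₋)` onto `ℝ`. The profile is the inverse function of `ξ`.
-/

theorem LocallyLipschitz.exists_pos_eventually_dist_le {α β : Type*} [PseudoMetricSpace α]
    [PseudoMetricSpace β] {f : α → β} (hf : LocallyLipschitz f) (x₀ : α) :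
    ∃ L > 0, ∀ᶠ x in 𝓝 x₀, dist (f x) (f x₀) ≤ L * dist x x₀ := by
  obtain ⟨K, t, ht, hK⟩ := hf x₀
  refine ⟨K + 1, by positivity, ?_⟩
  filter_upwards [ht] with x hx
  calc dist (f x) (f x₀) ≤ K * dist x x₀ := hK.dist_le_mul x hx x₀ (mem_of_mem_nhds ht)
    _ ≤ (K + 1) * dist x x₀ := by gcongr; linarith

theorem tendsto_nhdsLT_atBot_of_hasDerivAt_le {g g' : ℝ → ℝ} {b L : ℝ} (hL : 0 < L)
    (hg : ∀ᶠ x in 𝓝[<] b, HasDerivAt g (g' x) x)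
    (hg' : ∀ᶠ x in 𝓝[<] b, g' x ≤ -(L * (b - x))⁻¹) :
    Tendsto g (𝓝[<] b) atBot := by
  obtain ⟨d, hdb, hd⟩ := mem_nhdsLT_iff_exists_Ico_subset.1 (hg.and hg')
  -- `g` is dominated by `L⁻¹ * log (b - x)` up to a constant
  set h : ℝ → ℝ := fun x => g x - L⁻¹ * Real.log (b - x)
  have hh' : ∀ x ∈ Ico d b, HasDerivAt h (g' x + (L * (b - x))⁻¹) x := by
    intro x hx
    have hlog := ((hasDerivAt_id x).const_sub b).log (sub_pos.2 hx.2).ne'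
    refine ((hd hx).1.sub (hlog.const_mul L⁻¹)).congr_deriv ?_
    rw [id, mul_inv]; ring
  have hh : AntitoneOn h (Ico d b) := by
    refine antitoneOn_of_hasDerivWithinAt_nonpos (f' := fun x => g' x + (L * (b - x))⁻¹)
      (convex_Ico d b)
      (fun x hx => (hh' x hx).continuousAt.continuousWithinAt) (fun x hx => ?_) (fun x hx => ?_)
    · rw [interior_Ico] at hx
      exact (hh' x (Ioo_subset_Ico_self hx)).hasDerivWithinAt
    · rw [interior_Ico] at hx
      linarith [(hd (Ioo_subset_Ico_self hx)).2]
  have hlog : Tendsto (fun x => h d + L⁻¹ * Real.log (b - x)) (𝓝[<] b) atBot := by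
    refine tendsto_atBot_add_const_left _ _
      ((Real.tendsto_log_nhdsGT_zero.comp ?_).const_mul_atBot (inv_pos.2 hL))
    refine tendsto_nhdsWithin_iff.2 ⟨?_, eventually_nhdsWithin_of_forall fun x hx => ?_⟩
    · exact ((continuous_const.sub continuous_id).tendsto' b 0 (sub_self b)).mono_left
        nhdsWithin_le_nhds
    · exact sub_pos.2 (mem_Iio.1 hx)
  refine tendsto_atBot_mono' _ ?_ hlog
  filter_upwards [Ico_mem_nhdsLT hdb] with x hx
  have := hh (left_mem_Ico.2 hdb) hx hx.1
  simp only [h] at this ⊢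
  linarith

theorem tendsto_nhdsGT_atTop_of_hasDerivAt_le {g g' : ℝ → ℝ} {a L : ℝ} (hL : 0 < L)
    (hg : ∀ᶠ x in 𝓝[>] a, HasDerivAt g (g' x) x)
    (hg' : ∀ᶠ x in 𝓝[>] a, g' x ≤ -(L * (x - a))⁻¹) :
    Tendsto g (𝓝[>] a) atTop := by
  have hrefl : Tendsto (fun y => -g (-y)) (𝓝[<] (-a)) atBot := by
    refine tendsto_nhdsLT_atBot_of_hasDerivAt_le (g' := fun y => g' (-y)) hL ?_ ?_
    · filter_upwards [tendsto_neg_nhdsLT_neg.eventually hg] with y hy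
      exact (hy.comp y (hasDerivAt_neg y)).neg.congr_deriv (by ring)
    · filter_upwards [tendsto_neg_nhdsLT_neg.eventually hg'] with y hy
      rwa [show -a - y = -y - a by ring]
  refine (tendsto_neg_atBot_atTop.comp (hrefl.comp tendsto_neg_nhdsGT)).congr fun x => ?_
  simp

theorem ContinuousOn.integral_hasDerivAt_right {E : Type*} [NormedAddCommGroup E]
    [NormedSpace ℝ E] [CompleteSpace E] {f : ℝ → E} {s : Set ℝ} [s.OrdConnected] {c x : ℝ}
    (hf : ContinuousOn f s) (hs : IsOpen s) (hc : c ∈ s) (hx : x ∈ s) :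
    HasDerivAt (fun y => ∫ t in c..y, f t) (f x) x :=
  intervalIntegral.integral_hasDerivAt_right
    ((hf.mono (Set.OrdConnected.uIcc_subset ‹_› hc hx)).intervalIntegrable)
    (hf.stronglyMeasurableAtFilter hs x hx) (hf.continuousAt (hs.mem_nhds hx))

theorem Antitone.tendsto_atTop_of_range_eq_Ioo {ι α : Type*} [Preorder ι]
    [ConditionallyCompleteLinearOrder α] [TopologicalSpace α] [OrderTopology α] [DenselyOrdered α]
    {p : ι → α} {a b : α} (hp : Antitone p) (hab : a < b) (h : range p = Ioo a b) :
    Tendsto p atTop (𝓝 a) := by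
  simpa [iInf, h, csInf_Ioo hab] using tendsto_atTop_ciInf hp (h ▸ bddBelow_Ioo)

theorem Antitone.tendsto_atBot_of_range_eq_Ioo {ι α : Type*} [Preorder ι]
    [ConditionallyCompleteLinearOrder α] [TopologicalSpace α] [OrderTopology α] [DenselyOrdered α]
    {p : ι → α} {a b : α} (hp : Antitone p) (hab : a < b) (h : range p = Ioo a b) :
    Tendsto p atBot (𝓝 b) := by
  simpa [iSup, h, csSup_Ioo hab] using tendsto_atBot_ciSup hp (h ▸ bddAbove_Ioo)

theorem exists_inverse_of_hasDerivAt_neg_of_tendsto {g g' : ℝ → ℝ} {a b : ℝ} (hab : a < b)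
    (hg : ∀ x ∈ Ioo a b, HasDerivAt g (g' x) x) (hg' : ∀ x ∈ Ioo a b, g' x < 0)
    (ha : Tendsto g (𝓝[>] a) atTop) (hb : Tendsto g (𝓝[<] b) atBot) :
    ∃ p : ℝ → ℝ, Function.LeftInverse g p ∧ StrictAnti p ∧ range p = Ioo a b ∧
      ∀ ξ, HasDerivAt p (g' (p ξ))⁻¹ ξ := by
  have hcont : ContinuousOn g (Ioo a b) := fun x hx => (hg x hx).continuousAt.continuousWithinAt
  have hanti : StrictAntiOn g (Ioo a b) :=
    strictAntiOn_of_hasDerivWithinAt_neg (convex_Ioo a b) hcont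
      (by simpa using fun x hx => (hg x hx).hasDerivWithinAt) (by simpa using hg')
  have hsurj : SurjOn g (Ioo a b) univ :=
    hcont.surjOn_of_tendsto' (nonempty_Ioo.2 hab) (by rwa [tendsto_comp_coe_Ioo_atBot hab])
      (by rwa [tendsto_comp_coe_Ioo_atTop hab])
  set p := Function.invFunOn g (Ioo a b)
  have hp : ∀ ξ, p ξ ∈ Ioo a b ∧ g (p ξ) = ξ := fun ξ =>
    Function.invFunOn_pos (hsurj (mem_univ ξ))
  have hp_anti : StrictAnti p := fun ξ η hξη => by
    rwa [← hanti.lt_iff_gt (hp ξ).1 (hp η).1, (hp ξ).2, (hp η).2]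
  have hrange : range p = Ioo a b :=
    (range_subset_iff.2 fun ξ => (hp ξ).1).antisymm fun x hx =>
      ⟨g x, hanti.injOn (hp _).1 hx (hp _).2⟩
  have hp_cont : Continuous p := by
    refine continuous_ofDual.comp (hp_anti.dual_right.isEmbedding_of_ordConnected ?_).continuous
    rw [range_comp, hrange, OrderDual.toDual.image_eq_preimage_symm]
    exact ordConnected_Ioo.dual
  refine ⟨p, fun ξ => (hp ξ).2, hp_anti, hrange, fun ξ => ?_⟩
  exact HasDerivAt.of_local_left_inverse hp_cont.continuousAt (hg _ (hp ξ).1) (hg' _ (hp ξ).1).ne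
    (Eventually.of_forall fun η => (hp η).2)

theorem exists_heteroclinic_of_neg_on_Ioo {F : ℝ → ℝ} {a b : ℝ} (hab : a < b)
    (hF : LocallyLipschitz F) (ha : F a = 0) (hb : F b = 0) (hneg : ∀ x ∈ Ioo a b, F x < 0) :
    ∃ p : ℝ → ℝ, StrictAnti p ∧ range p = Ioo a b ∧ (∀ ξ, HasDerivAt p (F (p ξ)) ξ) ∧
      Tendsto p atBot (𝓝 b) ∧ Tendsto p atTop (𝓝 a) := by
  set g : ℝ → ℝ := fun y => ∫ t in (a + b) / 2..y, (F t)⁻¹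
  have hg : ∀ x ∈ Ioo a b, HasDerivAt g (F x)⁻¹ x := fun x hx =>
    (hF.continuous.continuousOn.inv₀ fun y hy => (hneg y hy).ne).integral_hasDerivAt_right
      isOpen_Ioo ⟨by linarith, by linarith⟩ hx
  have hinv : ∀ x ∈ Ioo a b, ∀ m, |F x| ≤ m → (F x)⁻¹ ≤ -m⁻¹ := by
    intro x hx m hm
    rw [abs_of_neg (hneg x hx)] at hm
    rw [le_neg, ← inv_neg]
    exact inv_anti₀ (neg_pos.2 (hneg x hx)) hm
  have htop : Tendsto g (𝓝[>] a) atTop := by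
    obtain ⟨L, hL, hFa⟩ := hF.exists_pos_eventually_dist_le a
    refine tendsto_nhdsGT_atTop_of_hasDerivAt_le (g' := fun x => (F x)⁻¹) hL ?_ ?_
    · filter_upwards [Ioo_mem_nhdsGT hab] with x hx using hg x hx
    · filter_upwards [Ioo_mem_nhdsGT hab, nhdsWithin_le_nhds hFa] with x hx hxa
      rw [Real.dist_eq, Real.dist_eq, ha, sub_zero, abs_of_pos (sub_pos.2 hx.1)] at hxa
      exact hinv x hx _ hxa
  have hbot : Tendsto g (𝓝[<] b) atBot := by
    obtain ⟨L, hL, hFb⟩ := hF.exists_pos_eventually_dist_le b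
    refine tendsto_nhdsLT_atBot_of_hasDerivAt_le (g' := fun x => (F x)⁻¹) hL ?_ ?_
    · filter_upwards [Ioo_mem_nhdsLT hab] with x hx using hg x hx
    · filter_upwards [Ioo_mem_nhdsLT hab, nhdsWithin_le_nhds hFb] with x hx hxb
      rw [Real.dist_eq, Real.dist_eq, hb, sub_zero, abs_of_neg (sub_neg.2 hx.2), neg_sub] at hxb
      exact hinv x hx _ hxb
  obtain ⟨p, -, hp_anti, hp_range, hp_deriv⟩ :=
    exists_inverse_of_hasDerivAt_neg_of_tendsto hab hg (fun x hx => inv_lt_zero.2 (hneg x hx))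
      htop hbot
  exact ⟨p, hp_anti, hp_range, fun ξ => by simpa using hp_deriv ξ,
    hp_anti.antitone.tendsto_atBot_of_range_eq_Ioo hab hp_range,
    hp_anti.antitone.tendsto_atTop_of_range_eq_Ioo hab hp_range⟩

/-- Scanning-to-deceleration shock profile (Theorem 4.4): under the chord
condition, there is a strictly decreasing viscous profile joining
`u_minus` (at `ξ = −∞`) to `u_plus` (at `ξ = +∞`) for the traveling-wave
equation `u' = −s(u − u_minus) − (w(u) − v_minus)` with Rankine–Hugoniot
speed `s = −(v_plus − v_minus)/(u_plus − u_minus)`. -/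
theorem exists_scanning_to_deceleration_shock_profile
    (u_plus u_minus : ℝ) (hlt : u_plus < u_minus)
    (w : ℝ → ℝ) (hw : LocallyLipschitz w)
    (v_minus v_plus s : ℝ)
    (hvm : v_minus = w u_minus) (hvp : v_plus = w u_plus)
    (hs : s = -((v_plus - v_minus) / (u_plus - u_minus)))
    (hchord : ∀ u ∈ Set.Ioo u_plus u_minus,
      (v_plus - v_minus) / (u_plus - u_minus) > (w u - v_minus) / (u - u_minus)) :
    ∃ u : ℝ → ℝ, ContDiff ℝ 1 u ∧ StrictAnti u ∧
      (∀ ξ : ℝ, u ξ ∈ Set.Ioo u_plus u_minus) ∧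
      (∀ ξ : ℝ, deriv u ξ = -s * (u ξ - u_minus) - (w (u ξ) - v_minus)) ∧
      Tendsto u atBot (nhds u_minus) ∧
      Tendsto u atTop (nhds u_plus) := by
  set F : ℝ → ℝ := fun x => -s * (x - u_minus) - (w x - v_minus)
  have hF : LocallyLipschitz F :=
    (contDiff_const.mul (contDiff_id.sub contDiff_const) : ContDiff ℝ 1 _).locallyLipschitz.sub
      (hw.sub (LocallyLipschitz.const _))
  have hF_minus : F u_minus = 0 := by simp [F, hvm]
  have hF_plus : F u_plus = 0 := by
    have : u_plus - u_minus ≠ 0 := (sub_neg.2 hlt).ne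
    simp only [F, hs, ← hvp]
    field_simp
    ring
  have hF_neg : ∀ x ∈ Ioo u_plus u_minus, F x < 0 := fun x hx => by
    have := (div_lt_iff_of_neg (sub_neg.2 hx.2)).1 (hchord x hx)
    simp only [F, hs]
    linarith
  obtain ⟨p, hp_anti, hp_range, hp_deriv, hp_bot, hp_top⟩ :=
    exists_heteroclinic_of_neg_on_Ioo hlt hF hF_plus hF_minus hF_neg
  have hp_deriv_eq : deriv p = F ∘ p := funext fun ξ => (hp_deriv ξ).deriv
  have hp_diff : Differentiable ℝ p := fun ξ => (hp_deriv ξ).differentiableAt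
  have hp_C1 : ContDiff ℝ 1 p :=
    contDiff_one_iff_deriv.2 ⟨hp_diff, hp_deriv_eq ▸ hF.continuous.comp hp_diff.continuous⟩
  exact ⟨p, hp_C1, hp_anti, fun ξ => hp_range ▸ mem_range_self ξ, fun ξ => (hp_deriv ξ).deriv,
    hp_bot, hp_top⟩
end

section
/- (Scanning-to-acceleration shock profile; Theorem 4.3.) Let u₋ < u₊ be real numbers, let w : ℝ → ℝ be locally Lipschitz, set v₋ := w(u₋), v₊ := w(u₊), and s := −(v₊ − v₋)/(u₊ − u₋). Assume the chord condition: for every u ∈ (u₋, u₊), (v₊ − v₋)/(u₊ − u₋) > (w(u) − v₋)/(u − u₋). Then there exists a continuously differentiable, strictly increasing function u : ℝ → ℝ with values in (u₋, u₊), satisfying u′(ξ) = −s·(u(ξ) − u₋) − (w(u(ξ)) − v₋) for all ξ ∈ ℝ, with u(ξ) → u₋ as ξ → −∞ and u(ξ) → u₊ as ξ → +∞. (This establishes the existence of acceleration shocks, which are not allowed by the LWR model.) -/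
/-!
The profile solves the autonomous equation `u' = F u` with
`F x = -s (x - u₋) - (w x - v₋)`. The Rankine–Hugoniot speed makes `F` vanish at `u₋` and `u₊`,
and the chord condition makes it positive in between. Separating variables, the inverse of the
profile is `G x = ∫_c^x dt / F t`, which is strictly increasing on `(u₋, u₊)`. Since `F` is locally
Lipschitz and vanishes at the endpoints, `F t ≤ K |t - u±|` there, so `G` diverges logarithmically
at both ends and maps `(u₋, u₊)` onto `ℝ`; its inverse is the profile.
-/

open Filter Set Topology MeasureTheory intervalIntegral Real

theorem LocallyLipschitz.exists_pos_eventually_abs_le_mul_dist {α : Type*} [PseudoMetricSpace α]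
    {F : α → ℝ} (hF : LocallyLipschitz F) {p : α} (hp : F p = 0) :
    ∃ K > 0, ∀ᶠ x in 𝓝 p, |F x| ≤ K * dist x p := by
  obtain ⟨K, t, ht, hK⟩ := hF p
  refine ⟨K + 1, by positivity, ?_⟩
  filter_upwards [ht] with x hx
  have hlip := hK.dist_le_mul x hx p (mem_of_mem_nhds ht)
  rw [Real.dist_eq, hp, sub_zero] at hlip
  nlinarith [dist_nonneg (x := x) (y := p)]

theorem intervalIntegrable_inv_of_pos {F : ℝ → ℝ} {a b x y : ℝ} (hF : ContinuousOn F (Ioo a b))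
    (hpos : ∀ t ∈ Ioo a b, 0 < F t) (hx : x ∈ Ioo a b) (hy : y ∈ Ioo a b) :
    IntervalIntegrable (fun t => (F t)⁻¹) volume x y :=
  ((hF.inv₀ fun t ht => (hpos t ht).ne').mono
    (ordConnected_Ioo.uIcc_subset hx hy)).intervalIntegrable

theorem hasDerivAt_integral_inv_of_pos {F : ℝ → ℝ} {a b c x : ℝ} (hF : ContinuousOn F (Ioo a b))
    (hpos : ∀ t ∈ Ioo a b, 0 < F t) (hc : c ∈ Ioo a b) (hx : x ∈ Ioo a b) :
    HasDerivAt (fun y => ∫ t in c..y, (F t)⁻¹) (F x)⁻¹ x :=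
  integral_hasDerivAt_right (intervalIntegrable_inv_of_pos hF hpos hc hx)
    ((hF.inv₀ fun t ht => (hpos t ht).ne').stronglyMeasurableAtFilter isOpen_Ioo x hx)
    ((hF.continuousAt (isOpen_Ioo.mem_nhds hx)).inv₀ (hpos x hx).ne')

theorem integral_inv_const_mul_sub {K b x₀ x : ℝ} (hx₀ : x₀ < b) (hx : x < b) :
    ∫ t in x₀..x, (K * (b - t))⁻¹ = K⁻¹ * log ((b - x₀) / (b - x)) := by
  simp_rw [mul_inv]
  rw [intervalIntegral.integral_const_mul, integral_comp_sub_left (fun t => t⁻¹) b,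
    integral_inv_of_pos (sub_pos.2 hx) (sub_pos.2 hx₀)]

theorem tendsto_const_sub_nhdsLT (b : ℝ) : Tendsto (fun x => b - x) (𝓝[<] b) (𝓝[>] 0) := by
  refine tendsto_nhdsWithin_iff.2
    ⟨?_, eventually_mem_nhdsWithin.mono fun x hx => sub_pos.2 (mem_Iio.1 hx)⟩
  exact ((continuous_const.sub continuous_id).tendsto' b 0 (sub_self b)).mono_left
    nhdsWithin_le_nhds

theorem tendsto_integral_inv_nhdsLT_atTop {F : ℝ → ℝ} {a b c K : ℝ}
    (hF : ContinuousOn F (Ioo a b)) (hpos : ∀ x ∈ Ioo a b, 0 < F x) (hc : c ∈ Ioo a b)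
    (hK : 0 < K) (hbound : ∀ᶠ x in 𝓝[<] b, F x ≤ K * (b - x)) :
    Tendsto (fun x => ∫ t in c..x, (F t)⁻¹) (𝓝[<] b) atTop := by
  obtain ⟨l, hlb, hl⟩ := mem_nhdsLT_iff_exists_Ioo_subset.1 (hbound.and (Ioo_mem_nhdsLT hc.2))
  obtain ⟨x₀, hlx₀, hx₀b⟩ := exists_between (mem_Iio.1 hlb)
  have hx₀ : x₀ ∈ Ioo a b := ⟨hc.1.trans (hl ⟨hlx₀, hx₀b⟩).2.1, hx₀b⟩
  have hlower : ∀ x ∈ Ioo x₀ b,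
      (∫ t in c..x₀, (F t)⁻¹) + K⁻¹ * log ((b - x₀) / (b - x)) ≤ ∫ t in c..x, (F t)⁻¹ := by
    intro x hx
    have hxab : x ∈ Ioo a b := ⟨hx₀.1.trans hx.1, hx.2⟩
    rw [← integral_add_adjacent_intervals (intervalIntegrable_inv_of_pos hF hpos hc hx₀)
      (intervalIntegrable_inv_of_pos hF hpos hx₀ hxab), ← integral_inv_const_mul_sub hx₀b hx.2]
    refine add_le_add le_rfl (integral_mono_on hx.1.le ?_
      (intervalIntegrable_inv_of_pos hF hpos hx₀ hxab) fun t ht => ?_)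
    · refine (ContinuousOn.inv₀ (by fun_prop) fun t ht => ?_).intervalIntegrable
      rw [uIcc_of_le hx.1.le] at ht
      exact (mul_pos hK (sub_pos.2 (ht.2.trans_lt hx.2))).ne'
    · have htb : t < b := ht.2.trans_lt hx.2
      exact inv_anti₀ (hpos t ⟨hx₀.1.trans_le ht.1, htb⟩)
        (hl ⟨hlx₀.trans_le ht.1, htb⟩).1
  have hlog : Tendsto (fun x => K⁻¹ * log ((b - x₀) / (b - x))) (𝓝[<] b) atTop :=
    ((tendsto_log_atTop.comp (tendsto_inv_nhdsGT_zero.const_mul_atTop (sub_pos.2 hx₀b))).comp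
      (tendsto_const_sub_nhdsLT b)).const_mul_atTop (inv_pos.2 hK)
  exact tendsto_atTop_mono' _ (mem_of_superset (Ioo_mem_nhdsLT hx₀b) hlower)
    (tendsto_atTop_add_const_left _ _ hlog)

theorem tendsto_integral_inv_nhdsGT_atBot {F : ℝ → ℝ} {a b c K : ℝ}
    (hF : ContinuousOn F (Ioo a b)) (hpos : ∀ x ∈ Ioo a b, 0 < F x) (hc : c ∈ Ioo a b)
    (hK : 0 < K) (hbound : ∀ᶠ x in 𝓝[>] a, F x ≤ K * (x - a)) :
    Tendsto (fun x => ∫ t in c..x, (F t)⁻¹) (𝓝[>] a) atBot := by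
  have hneg : MapsTo (fun x : ℝ => -x) (Ioo (-b) (-a)) (Ioo a b) := fun x hx =>
    ⟨lt_neg_of_lt_neg hx.2, neg_lt_of_neg_lt hx.1⟩
  have hreflected := tendsto_integral_inv_nhdsLT_atTop (F := fun x => F (-x)) (c := -c)
    (hF.comp continuousOn_neg hneg) (fun x hx => hpos _ (hneg hx))
    ⟨neg_lt_neg hc.2, neg_lt_neg hc.1⟩ hK
    (tendsto_neg_nhdsLT_neg.eventually hbound |>.mono fun x hx => by linarith)
  refine (tendsto_neg_atTop_atBot.comp (hreflected.comp tendsto_neg_nhdsGT)).congr fun x => ?_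
  simp only [Function.comp_apply, integral_comp_neg fun t => (F t)⁻¹, neg_neg]
  rw [integral_symm, neg_neg]

theorem StrictMonoOn.exists_rightInverse_of_tendsto {G : ℝ → ℝ} {a b : ℝ} (hab : a < b)
    (hmono : StrictMonoOn G (Ioo a b)) (hcont : ContinuousOn G (Ioo a b))
    (hbot : Tendsto G (𝓝[>] a) atBot) (htop : Tendsto G (𝓝[<] b) atTop) :
    ∃ u : ℝ → ℝ, StrictMono u ∧ Continuous u ∧ (∀ ξ, u ξ ∈ Ioo a b) ∧ (∀ ξ, G (u ξ) = ξ) ∧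
      Tendsto u atBot (𝓝 a) ∧ Tendsto u atTop (𝓝 b) := by
  have hsurj : Function.Surjective ((Ioo a b).domRestrict G) :=
    surjOn_iff_surjective.1 <| hcont.surjOn_of_tendsto (nonempty_Ioo.2 hab)
      ((tendsto_comp_coe_Ioo_atBot hab).2 hbot) ((tendsto_comp_coe_Ioo_atTop hab).2 htop)
  let e : Ioo a b ≃o ℝ := hmono.domRestrict.orderIsoOfSurjective _ hsurj
  refine ⟨fun ξ => e.symm ξ, (Subtype.strictMono_coe _).comp e.symm.strictMono,
    continuous_subtype_val.comp e.symm.continuous, fun ξ => (e.symm ξ).2,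
    e.apply_symm_apply, ?_, ?_⟩
  · exact ((tendsto_comp_coe_Ioo_atBot hab).2 (tendsto_id'.2 nhdsWithin_le_nhds)).comp
      e.symm.tendsto_atBot
  · exact ((tendsto_comp_coe_Ioo_atTop hab).2 (tendsto_id'.2 nhdsWithin_le_nhds)).comp
      e.symm.tendsto_atTop

theorem LocallyLipschitz.exists_heteroclinic_of_pos {F : ℝ → ℝ} (hF : LocallyLipschitz F)
    {a b : ℝ} (hab : a < b) (ha : F a = 0) (hb : F b = 0) (hpos : ∀ x ∈ Ioo a b, 0 < F x) :
    ∃ u : ℝ → ℝ, ContDiff ℝ 1 u ∧ StrictMono u ∧ (∀ ξ, u ξ ∈ Ioo a b) ∧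
      (∀ ξ, HasDerivAt u (F (u ξ)) ξ) ∧ Tendsto u atBot (𝓝 a) ∧ Tendsto u atTop (𝓝 b) := by
  have hFc : ContinuousOn F (Ioo a b) := hF.continuous.continuousOn
  have hc : (a + b) / 2 ∈ Ioo a b := ⟨by linarith, by linarith⟩
  set G : ℝ → ℝ := fun x => ∫ t in (a + b) / 2..x, (F t)⁻¹
  have hG : ∀ x ∈ Ioo a b, HasDerivAt G (F x)⁻¹ x := fun x hx =>
    hasDerivAt_integral_inv_of_pos hFc hpos hc hx
  have hGc : ContinuousOn G (Ioo a b) := fun x hx => (hG x hx).continuousAt.continuousWithinAt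
  have hGmono : StrictMonoOn G (Ioo a b) := strictMonoOn_of_hasDerivWithinAt_pos
    (convex_Ioo a b) hGc (fun x hx => (hG x (interior_subset hx)).hasDerivWithinAt)
    fun x hx => inv_pos.2 (hpos x (interior_subset hx))
  obtain ⟨Ka, hKa, hFa⟩ := hF.exists_pos_eventually_abs_le_mul_dist ha
  obtain ⟨Kb, hKb, hFb⟩ := hF.exists_pos_eventually_abs_le_mul_dist hb
  have hGbot := tendsto_integral_inv_nhdsGT_atBot hFc hpos hc hKa <| by
    filter_upwards [nhdsWithin_le_nhds hFa, self_mem_nhdsWithin] with x hx hax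
    rw [Real.dist_eq, abs_of_pos (sub_pos.2 hax)] at hx
    exact (le_abs_self _).trans hx
  have hGtop := tendsto_integral_inv_nhdsLT_atTop hFc hpos hc hKb <| by
    filter_upwards [nhdsWithin_le_nhds hFb, self_mem_nhdsWithin] with x hx hxb
    rw [Real.dist_eq, abs_of_neg (sub_neg.2 hxb), neg_sub] at hx
    exact (le_abs_self _).trans hx
  obtain ⟨u, humono, hucont, hmem, hGu, hua, hub⟩ :=
    hGmono.exists_rightInverse_of_tendsto hab hGc hGbot hGtop
  have hu : ∀ ξ, HasDerivAt u (F (u ξ)) ξ := fun ξ => by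
    simpa only [inv_inv] using (hG _ (hmem ξ)).of_local_left_inverse hucont.continuousAt
      (inv_ne_zero (hpos _ (hmem ξ)).ne') (Eventually.of_forall hGu)
  refine ⟨u, contDiff_one_iff_deriv.2 ⟨fun ξ => (hu ξ).differentiableAt, ?_⟩, humono, hmem, hu,
    hua, hub⟩
  rw [show deriv u = F ∘ u from funext fun ξ => (hu ξ).deriv]
  exact hF.continuous.comp hucont

/-- Scanning-to-acceleration shock profile (Theorem 4.3): under the chord
condition, there is a strictly increasing viscous profile joining
`u_minus` (at `ξ = −∞`) to `u_plus` (at `ξ = +∞`) for the traveling-wave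
equation `u' = −s(u − u_minus) − (w(u) − v_minus)` with Rankine–Hugoniot
speed `s = −(v_plus − v_minus)/(u_plus − u_minus)`. This establishes the
existence of acceleration shocks, which are not allowed by the LWR model. -/
theorem exists_scanning_to_acceleration_shock_profile
    (u_minus u_plus : ℝ) (hlt : u_minus < u_plus)
    (w : ℝ → ℝ) (hw : LocallyLipschitz w)
    (v_minus v_plus s : ℝ)
    (hvm : v_minus = w u_minus) (hvp : v_plus = w u_plus)
    (hs : s = -((v_plus - v_minus) / (u_plus - u_minus)))
    (hchord : ∀ u ∈ Set.Ioo u_minus u_plus,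
      (v_plus - v_minus) / (u_plus - u_minus) > (w u - v_minus) / (u - u_minus)) :
    ∃ u : ℝ → ℝ, ContDiff ℝ 1 u ∧ StrictMono u ∧
      (∀ ξ : ℝ, u ξ ∈ Set.Ioo u_minus u_plus) ∧
      (∀ ξ : ℝ, deriv u ξ = -s * (u ξ - u_minus) - (w (u ξ) - v_minus)) ∧
      Tendsto u atBot (nhds u_minus) ∧
      Tendsto u atTop (nhds u_plus) := by
  set F : ℝ → ℝ := fun x => -s * (x - u_minus) - (w x - v_minus)
  have hF : LocallyLipschitz F :=
    (ContDiff.locallyLipschitz (𝕂 := ℝ) (by fun_prop)).sub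
      (hw.sub (LocallyLipschitz.const _))
  have hFminus : F u_minus = 0 := by simp [F, hvm]
  have hFplus : F u_plus = 0 := by
    simp only [F, hs, neg_neg, ← hvp]
    field_simp [sub_ne_zero.2 hlt.ne']
    ring
  have hFpos : ∀ x ∈ Ioo u_minus u_plus, 0 < F x := fun x hx => by
    have := (div_lt_iff₀ (sub_pos.2 hx.1)).1 (hchord x hx)
    simp only [F, hs, neg_neg]
    linarith
  obtain ⟨u, hC1, humono, hmem, hu, hbot, htop⟩ :=
    hF.exists_heteroclinic_of_pos hlt hFminus hFplus hFpos
  exact ⟨u, hC1, humono, hmem, fun ξ => (hu ξ).deriv, hbot, htop⟩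
end
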